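/- arXiv:2411.01481 — 2 statements merged into one kernel-verified Lean document; each statement's English description precedes it below -/
import Mathlib

section
/- Let A be a q×n complex matrix, W a nonzero n×q complex matrix, m a positive integer, and k = max(Ind(AW), Ind(WA)). Then the range of A^{Ⓦ_m,W,†} equals the range of (WA)^k, where A^{Ⓦ_m,W,†} = W·A^{Ⓦ_m,W}·W·A·A^†. -/
/-!
Write `B = W A`, `X = (W A)^⊕` and `d = Ind(B)`. Since `X B X = X` and `R(X) = R(B^d)`, the
matrix `X` undoes one factor of `B` on every power `B^(i+1)` with `i ≥ d`, hence so does
`P = B X²` for `i ≥ d + 1`. Pushing `W` through the powers gives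
`A^{Ⓦ_m,W,†} = P^(m+1) B^m W A A^†`, whose range lies in `R(B X) = R(B^(d+1)) = R(B^d)`.
Conversely `A^{Ⓦ_m,W,†} A B^(d+1) = P^(m+1) B^(d+m+2) = B^(d+1)`, so `R(B^d)` lies in the range
of `A^{Ⓦ_m,W,†}`. Finally `R(B^k) = R(B^d)` because the ranges of the powers of `B` are constant
from the index on.
-/

open Matrix

/-- Index of a square matrix: least `d` with `rank (B^d) = rank (B^(d+1))`. -/
noncomputable def matInd {ι : Type*} [Fintype ι] [DecidableEq ι] (B : Matrix ι ι ℂ) : ℕ :=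
  sInf {d : ℕ | (B ^ d).rank = (B ^ (d + 1)).rank}

/-- `X` is the Moore-Penrose inverse of `A` (four Penrose equations). -/
noncomputable def IsMP {ι κ : Type*} [Fintype ι] [Fintype κ] (A : Matrix ι κ ℂ) (X : Matrix κ ι ℂ) : Prop :=
  A * X * A = A ∧ X * A * X = X ∧ (A * X)ᴴ = A * X ∧ (X * A)ᴴ = X * A

/-- Column space (range) of a matrix. -/
noncomputable def mrange {ι κ : Type*} [Fintype κ] (M : Matrix ι κ ℂ) : Submodule ℂ (ι → ℂ) :=
  LinearMap.range M.mulVecLin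

/-- Null space of a matrix. -/
noncomputable def mker {ι κ : Type*} [Fintype κ] (M : Matrix ι κ ℂ) : Submodule ℂ (κ → ℂ) :=
  LinearMap.ker M.mulVecLin

/-- `X` is the core-EP inverse of `B`. -/
noncomputable def IsCoreEP {ι : Type*} [Fintype ι] [DecidableEq ι] (B X : Matrix ι ι ℂ) : Prop :=
  X * B * X = X ∧ mrange X = mrange (B ^ matInd B) ∧ mrange Xᴴ = mrange (B ^ matInd B)

/-- `X` is the Drazin inverse of `B`. -/
noncomputable def IsDrazin {ι : Type*} [Fintype ι] [DecidableEq ι] (B X : Matrix ι ι ℂ) : Prop :=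
  X * B * X = X ∧ B * X = X * B ∧ B ^ (matInd B + 1) * X = B ^ matInd B

/-- `X` is the group inverse of `B`. -/
noncomputable def IsGroupInv {ι : Type*} [Fintype ι] (B X : Matrix ι ι ℂ) : Prop :=
  B * X * B = B ∧ X * B * X = X ∧ B * X = X * B

/-- Frobenius norm of a matrix. -/
noncomputable def frobNorm {ι κ : Type*} [Fintype ι] [Fintype κ] (M : Matrix ι κ ℂ) : ℝ :=
  Real.sqrt (∑ i, ∑ j, ‖M i j‖ ^ 2)

section Range

variable {ι κ μ ν : Type*} [Fintype κ] [Fintype μ]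

lemma mrange_mul_le (M : Matrix ι κ ℂ) (N : Matrix κ μ ℂ) :
    mrange (M * N) ≤ mrange M := by
  rw [mrange, mrange, mulVecLin_mul]
  exact LinearMap.range_comp_le_range _ _

lemma mrange_mul_congr_right [Fintype ν] (M : Matrix ι κ ℂ) {N : Matrix κ μ ℂ}
    {N' : Matrix κ ν ℂ} (h : mrange N = mrange N') : mrange (M * N) = mrange (M * N') := by
  simp only [mrange, mulVecLin_mul, LinearMap.range_comp] at h ⊢
  rw [h]

lemma mul_mul_eq_of_mrange_le [Fintype ι] {X : Matrix ι κ ℂ} {Y : Matrix κ ι ℂ}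
    {M : Matrix ι μ ℂ} (hX : X * Y * X = X) (hM : mrange M ≤ mrange X) : X * Y * M = M := by
  rw [ext_iff_mulVec]
  intro v
  obtain ⟨u, hu⟩ := hM ⟨v, rfl⟩
  change X *ᵥ u = M *ᵥ v at hu
  rw [← mulVec_mulVec, ← hu, mulVec_mulVec, hX]

end Range

lemma Matrix.mul_pow_mul_comm {ι κ R : Type*} [Fintype ι] [Fintype κ] [DecidableEq ι]
    [DecidableEq κ] [Semiring R] (W : Matrix ι κ R) (C : Matrix κ ι R) (t : ℕ) :
    W * (C * W) ^ t = (W * C) ^ t * W := by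
  induction t with
  | zero => simp
  | succ t ih => rw [pow_succ, pow_succ, ← Matrix.mul_assoc, ih]; simp only [Matrix.mul_assoc]

lemma pow_mul_pow_add_of_mul_pow_succ {M : Type*} [Monoid M] {P B : M} {d : ℕ}
    (h : ∀ i, d ≤ i → P * B ^ (i + 1) = B ^ i) (t : ℕ) {i : ℕ} (hi : d ≤ i) :
    P ^ t * B ^ (i + t) = B ^ i := by
  induction t with
  | zero => simp
  | succ t ih => rw [pow_succ, ← add_assoc, mul_assoc, h (i + t) (by omega), ih]

section Index

variable {ι : Type*} [Fintype ι] [DecidableEq ι]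

lemma rank_pow_matInd_succ (B : Matrix ι ι ℂ) :
    (B ^ (matInd B + 1)).rank = (B ^ matInd B).rank := by
  have hne : {d : ℕ | (B ^ d).rank = (B ^ (d + 1)).rank}.Nonempty := by
    by_contra! h
    refine not_strictAnti_of_wellFoundedLT (fun d ↦ (B ^ d).rank) (strictAnti_nat_of_succ_lt ?_)
    intro d
    refine lt_of_le_of_ne ?_ fun he ↦ h.subset (he.symm : d ∈ _)
    rw [pow_succ]
    exact rank_mul_le_left _ _
  exact (Nat.sInf_mem hne).symm

lemma mrange_pow_matInd_succ (B : Matrix ι ι ℂ) :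
    mrange (B ^ (matInd B + 1)) = mrange (B ^ matInd B) :=
  Submodule.eq_of_le_of_finrank_le (pow_succ B _ ▸ mrange_mul_le _ _)
    (rank_pow_matInd_succ B).ge

lemma mrange_pow_of_matInd_le (B : Matrix ι ι ℂ) {j : ℕ} (hj : matInd B ≤ j) :
    mrange (B ^ j) = mrange (B ^ matInd B) := by
  induction j, hj using Nat.le_induction with
  | base => rfl
  | succ j _ ih =>
    rw [pow_succ', mrange_mul_congr_right B ih, ← pow_succ', mrange_pow_matInd_succ]

namespace IsCoreEP

variable {B X : Matrix ι ι ℂ}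

lemma mul_pow_succ (hX : IsCoreEP B X) {i : ℕ} (hi : matInd B ≤ i) :
    X * B ^ (i + 1) = B ^ i := by
  rw [pow_succ', ← Matrix.mul_assoc]
  exact mul_mul_eq_of_mrange_le hX.1 (hX.2.1 ▸ (mrange_pow_of_matInd_le B hi).le)

lemma mul_sq_mul_pow_succ (hX : IsCoreEP B X) {i : ℕ} (hi : matInd B + 1 ≤ i) :
    B * (X * X) * B ^ (i + 1) = B ^ i := by
  obtain ⟨j, rfl⟩ : ∃ j, i = j + 1 := ⟨i - 1, by omega⟩
  rw [Matrix.mul_assoc, Matrix.mul_assoc, hX.mul_pow_succ (by omega), hX.mul_pow_succ (by omega),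
    ← pow_succ']

lemma mul_sq_pow_mul_pow_add (hX : IsCoreEP B X) (t : ℕ) :
    (B * (X * X)) ^ t * B ^ (matInd B + 1 + t) = B ^ (matInd B + 1) :=
  pow_mul_pow_add_of_mul_pow_succ (fun _ ↦ hX.mul_sq_mul_pow_succ) t le_rfl

lemma mrange_mul (hX : IsCoreEP B X) : mrange (B * X) = mrange (B ^ matInd B) := by
  rw [mrange_mul_congr_right B hX.2.1, ← pow_succ', mrange_pow_matInd_succ]

end IsCoreEP

end Index

theorem stmt3_general {q n : ℕ} (A : Matrix (Fin q) (Fin n) ℂ) (W : Matrix (Fin n) (Fin q) ℂ)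
    (m : ℕ) (k : ℕ)
    (hk : k = max (matInd (A * W)) (matInd (W * A)))
    (Adag : Matrix (Fin n) (Fin q) ℂ) (hAdag : IsMP A Adag)
    (WAcep : Matrix (Fin n) (Fin n) ℂ) (hWAcep : IsCoreEP (W * A) WAcep)
    (AepW AWGm : Matrix (Fin q) (Fin n) ℂ) (AWGMP : Matrix (Fin n) (Fin q) ℂ)
    (hAepW : AepW = A * (WAcep * WAcep))
    (hAWGm : AWGm = (AepW * W) ^ m * AepW * (W * A) ^ m)
    (hAWGMP : AWGMP = W * AWGm * W * A * Adag) :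
    mrange AWGMP = mrange ((W * A) ^ k) := by
  have hrange : mrange ((W * A) ^ k) = mrange ((W * A) ^ (matInd (W * A) + 1)) := by
    rw [mrange_pow_of_matInd_le _ (hk ▸ le_max_right _ _), mrange_pow_matInd_succ]
  have hform : AWGMP = (W * (A * (WAcep * WAcep))) ^ (m + 1) * ((W * A) ^ m * W * A * Adag) := by
    rw [hAWGMP, hAWGm, hAepW, ← Matrix.mul_assoc W (_ * _), ← Matrix.mul_assoc W (_ ^ m),
      mul_pow_mul_comm, Matrix.mul_assoc (_ ^ m) W, ← pow_succ]
    simp only [Matrix.mul_assoc]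
  have hcancel : (W * A) ^ m * W * A * Adag * (A * (W * A) ^ (matInd (W * A) + 1)) =
      (W * A) ^ (matInd (W * A) + 1 + (m + 1)) := by
    calc _ = (W * A) ^ m * W * (A * Adag * A) * (W * A) ^ (matInd (W * A) + 1) := by
          simp only [Matrix.mul_assoc]
      _ = _ := by rw [hAdag.1, Matrix.mul_assoc _ W A, ← pow_succ, ← pow_add, add_comm]
  have hinv : AWGMP * (A * (W * A) ^ (matInd (W * A) + 1)) = (W * A) ^ (matInd (W * A) + 1) := by
    rw [hform, Matrix.mul_assoc, hcancel, ← Matrix.mul_assoc W A, hWAcep.mul_sq_pow_mul_pow_add]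
  apply le_antisymm
  · calc mrange AWGMP ≤ mrange (W * (A * (WAcep * WAcep))) := by
          rw [hform, pow_succ', Matrix.mul_assoc]
          exact mrange_mul_le _ _
      _ ≤ mrange (W * A * WAcep) := by
          rw [← Matrix.mul_assoc, ← Matrix.mul_assoc]; exact mrange_mul_le _ _
      _ = mrange ((W * A) ^ k) := by rw [hWAcep.mrange_mul, hrange, mrange_pow_matInd_succ]
  · calc mrange ((W * A) ^ k) = mrange (AWGMP * (A * (W * A) ^ (matInd (W * A) + 1))) := by
          rw [hinv, hrange]
      _ ≤ mrange AWGMP := mrange_mul_le _ _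

theorem stmt3 {q n : ℕ} (A : Matrix (Fin q) (Fin n) ℂ) (W : Matrix (Fin n) (Fin q) ℂ)
    (hW : W ≠ 0) (m : ℕ) (hm : 0 < m) (k : ℕ)
    (hk : k = max (matInd (A * W)) (matInd (W * A)))
    (Adag : Matrix (Fin n) (Fin q) ℂ) (hAdag : IsMP A Adag)
    (WAcep : Matrix (Fin n) (Fin n) ℂ) (hWAcep : IsCoreEP (W * A) WAcep)
    (AepW AWGm : Matrix (Fin q) (Fin n) ℂ) (AWGMP : Matrix (Fin n) (Fin q) ℂ)
    (hAepW : AepW = A * (WAcep * WAcep))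
    (hAWGm : AWGm = (AepW * W) ^ m * AepW * (W * A) ^ m)
    (hAWGMP : AWGMP = W * AWGm * W * A * Adag) :
    mrange AWGMP = mrange ((W * A) ^ k) :=
  stmt3_general A W m k hk Adag hAdag WAcep hWAcep AepW AWGm AWGMP hAepW hAWGm hAWGMP
end

section
/- Let A be a q×n complex matrix, W a nonzero n×q complex matrix, B a q×p complex matrix, m a positive integer, and k = max(Ind(AW), Ind(WA)). Consider the matrix equation ((WA)^k)^*·(WA)^{m+1}·X = ((WA)^k)^*·(WA)^{m+1}·A^†·B in the unknown n×p matrix X. Then an n×p matrix X is a solution if and only if X = A^{Ⓦ_m,W,†}·B + (I_n − A^{Ⓦ_m,W,†}·A)·Z for some n×p matrix Z. -/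
open Matrix

lemma mrange_mul' {l m' n' : Type*} [Fintype l] [Fintype m'] [Fintype n']
    (M : Matrix l m' ℂ) (N : Matrix m' n' ℂ) :
    mrange (M * N) = (mrange N).map M.mulVecLin := by
  simp [mrange, Matrix.mulVecLin_mul, LinearMap.range_comp]

lemma mrange_mul_le' {l m' n' : Type*} [Fintype l] [Fintype m'] [Fintype n']
    (M : Matrix l m' ℂ) (N : Matrix m' n' ℂ) :
    mrange (M * N) ≤ mrange M := by
  rw [mrange_mul']
  rintro x ⟨y, -, rfl⟩
  exact ⟨y, rfl⟩

lemma exists_factor' {l m' n' : Type*} [Fintype l] [Fintype m'] [Fintype n'] [DecidableEq n']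
    (M : Matrix l n' ℂ) (N : Matrix l m' ℂ) (h : mrange M ≤ mrange N) :
    ∃ C : Matrix m' n' ℂ, M = N * C := by
  have hcol : ∀ j, ∃ v : m' → ℂ, N.mulVec v = fun i => M i j := by
    intro j
    have hmem : (fun i => M i j) ∈ mrange M := by
      refine ⟨Pi.single j 1, ?_⟩
      simp [Matrix.mulVecLin, Matrix.mulVec_single]; rfl
    exact h hmem
  choose v hv using hcol
  refine ⟨Matrix.of fun i j => v j i, ?_⟩
  ext i j
  have := congrFun (hv j) i
  simpa [Matrix.mul_apply, Matrix.mulVec, dotProduct] using this.symm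

open scoped ComplexOrder in
lemma rank_conjT' {l m' : Type*} [Fintype l] [Fintype m'] (M : Matrix l m' ℂ) :
    Mᴴ.rank = M.rank := Matrix.rank_conjTranspose M

lemma matInd_spec' {ι : Type*} [Fintype ι] [DecidableEq ι] (B : Matrix ι ι ℂ) :
    (B ^ matInd B).rank = (B ^ (matInd B + 1)).rank := by
  have hle : ∀ d : ℕ, (B ^ (d + 1)).rank ≤ (B ^ d).rank := by
    intro d
    rw [pow_succ]
    exact Matrix.rank_mul_le_left _ _
  have hne : {d : ℕ | (B ^ d).rank = (B ^ (d + 1)).rank}.Nonempty := by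
    by_contra hcon
    have hcon' : ∀ d : ℕ, (B ^ d).rank ≠ (B ^ (d + 1)).rank := fun d h => hcon ⟨d, h⟩
    have hlt : ∀ d : ℕ, (B ^ (d + 1)).rank < (B ^ d).rank := fun d =>
      lt_of_le_of_ne (hle d) (fun h => hcon' d h.symm)
    have key : ∀ d : ℕ, (B ^ d).rank + d ≤ (B ^ 0).rank := by
      intro d
      induction d with
      | zero => simp
      | succ d ih =>
        have := hlt d
        omega
    have := key ((B ^ 0).rank + 1)
    omega
  exact Nat.sInf_mem hne

theorem stmt15 {q n p : ℕ} (A : Matrix (Fin q) (Fin n) ℂ) (W : Matrix (Fin n) (Fin q) ℂ)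
    (hW : W ≠ 0) (B : Matrix (Fin q) (Fin p) ℂ) (m : ℕ) (hm : 0 < m) (k : ℕ)
    (hk : k = max (matInd (A * W)) (matInd (W * A)))
    (Adag : Matrix (Fin n) (Fin q) ℂ) (hAdag : IsMP A Adag)
    (WAcep : Matrix (Fin n) (Fin n) ℂ) (hWAcep : IsCoreEP (W * A) WAcep)
    (AepW AWGm : Matrix (Fin q) (Fin n) ℂ) (AWGMP : Matrix (Fin n) (Fin q) ℂ)
    (hAepW : AepW = A * (WAcep * WAcep))
    (hAWGm : AWGm = (AepW * W) ^ m * AepW * (W * A) ^ m)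
    (hAWGMP : AWGMP = W * AWGm * W * A * Adag)
    (X : Matrix (Fin n) (Fin p) ℂ) :
    ((W * A) ^ k)ᴴ * (W * A) ^ (m + 1) * X = ((W * A) ^ k)ᴴ * (W * A) ^ (m + 1) * Adag * B ↔
      ∃ Z : Matrix (Fin n) (Fin p) ℂ, X = AWGMP * B + (1 - AWGMP * A) * Z := by
  obtain ⟨hX1, hX2, hX3⟩ := hWAcep
  obtain ⟨hA1, -, -, -⟩ := hAdag
  set T : Matrix (Fin n) (Fin n) ℂ := W * A with hT
  set d : ℕ := matInd T with hd
  have hdk : d ≤ k := by rw [hk]; exact le_max_right _ _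
  -- range stabilization
  have hle1 : mrange (T ^ (d + 1)) ≤ mrange (T ^ d) := by
    rw [pow_succ]; exact mrange_mul_le' _ _
  have hstab : mrange (T ^ (d + 1)) = mrange (T ^ d) := by
    refine Submodule.eq_of_le_of_finrank_le hle1 (le_of_eq ?_)
    exact matInd_spec' T
  have hstabj : ∀ j : ℕ, mrange (T ^ (d + j)) = mrange (T ^ d) := by
    intro j
    induction j with
    | zero => rfl
    | succ j ih =>
      have h1 : T ^ (d + (j + 1)) = T * T ^ (d + j) := pow_succ' T (d + j)
      rw [h1, mrange_mul', ih, ← mrange_mul', ← pow_succ', hstab]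
  have hkd : mrange (T ^ k) = mrange (T ^ d) := by
    obtain ⟨j, rfl⟩ : ∃ j, k = d + j := ⟨k - d, by omega⟩
    exact hstabj j
  -- Q = T * WAcep is idempotent with range (and range of Qᴴ) equal to range T^d
  set Q : Matrix (Fin n) (Fin n) ℂ := T * WAcep with hQdef
  have hQ : Q * Q = Q := by
    calc (T * WAcep) * (T * WAcep) = T * (WAcep * T * WAcep) := by
          rw [Matrix.mul_assoc, ← Matrix.mul_assoc WAcep]
      _ = T * WAcep := by rw [hX1]
  have hrQ : mrange Q = mrange (T ^ d) := by
    rw [hQdef, mrange_mul', hX2, ← mrange_mul', ← pow_succ', hstab]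
  have hQX : Q * WAcep = WAcep := by
    obtain ⟨G, hG⟩ := exists_factor' WAcep Q (by rw [hrQ]; exact le_of_eq hX2)
    rw [hG, ← Matrix.mul_assoc, hQ]
  have hTXX : T * (WAcep * WAcep) = WAcep := by
    rw [← Matrix.mul_assoc]; exact hQX
  have hQH2 : Qᴴ * Qᴴ = Qᴴ := by rw [← Matrix.conjTranspose_mul, hQ]
  have hleQH : mrange Qᴴ ≤ mrange (T ^ d) := by
    have e : Qᴴ = WAcepᴴ * Tᴴ := by rw [hQdef, Matrix.conjTranspose_mul]
    calc mrange Qᴴ = mrange (WAcepᴴ * Tᴴ) := by rw [e]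
      _ ≤ mrange WAcepᴴ := mrange_mul_le' _ _
      _ ≤ mrange (T ^ d) := le_of_eq hX3
  have hrQH : mrange Qᴴ = mrange (T ^ d) := by
    refine Submodule.eq_of_le_of_finrank_le hleQH (le_of_eq ?_)
    rw [← hrQ]
    exact (rank_conjT' Q).symm
  have hQTk : Qᴴ * T ^ k = T ^ k := by
    obtain ⟨F, hF⟩ := exists_factor' (T ^ k) Qᴴ (by rw [hrQH]; exact le_of_eq hkd)
    rw [hF, ← Matrix.mul_assoc, hQH2]
  have hTkQ : (T ^ k)ᴴ * Q = (T ^ k)ᴴ := by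
    have h2 := congrArg Matrix.conjTranspose hQTk
    simpa [Matrix.conjTranspose_mul] using h2
  -- T^(j+1) * WAcep^(j+1) = Q
  have hpow : ∀ j : ℕ, T ^ (j + 1) * WAcep ^ (j + 1) = Q := by
    intro j
    induction j with
    | zero => simp only [zero_add, pow_one]; rfl
    | succ j ih =>
      have e1 : WAcep ^ (j + 1 + 1) = WAcep * WAcep ^ (j + 1) := pow_succ' _ _
      have e2 : WAcep ^ (j + 1) = WAcep * WAcep ^ j := pow_succ' _ _
      have e3 : T ^ (j + 1 + 1) = T ^ (j + 1) * T := pow_succ _ _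
      calc T ^ (j + 1 + 1) * WAcep ^ (j + 1 + 1)
          = T ^ (j + 1) * (T * (WAcep * WAcep) * WAcep ^ j) := by
            rw [e3, e1, e2]; simp only [Matrix.mul_assoc]
        _ = T ^ (j + 1) * WAcep ^ (j + 1) := by rw [hTXX, ← e2]
        _ = Q := ih
  -- reductions of the weighted m-weak group expression
  have hWAep : W * AepW = WAcep := by
    rw [hAepW, ← Matrix.mul_assoc]; exact hTXX
  have hsemi : ∀ j : ℕ, W * (AepW * W) ^ j = WAcep ^ j * W := by
    intro j
    induction j with
    | zero => simp
    | succ j ih =>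
      rw [pow_succ, ← Matrix.mul_assoc, ih, pow_succ]
      simp only [Matrix.mul_assoc]
      rw [← Matrix.mul_assoc W AepW W, hWAep]
  set M : Matrix (Fin n) (Fin n) ℂ := (T ^ k)ᴴ * T ^ (m + 1) with hMdef
  set N : Matrix (Fin n) (Fin n) ℂ := WAcep ^ (m + 1) * T ^ (m + 1) with hNdef
  have hWAWGm : W * AWGm = WAcep ^ (m + 1) * T ^ m := by
    rw [hAWGm, ← Matrix.mul_assoc, ← Matrix.mul_assoc, hsemi m,
      Matrix.mul_assoc (WAcep ^ m) W AepW, hWAep, ← pow_succ]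
  have hAWA : W * AWGm * W * A = N := by
    rw [hWAWGm, hNdef, pow_succ T m, hT]
    simp only [Matrix.mul_assoc]
  have hAWGMPeq : AWGMP = N * Adag := by rw [hAWGMP, hAWA]
  have hA1' : A * (Adag * A) = A := by rw [← Matrix.mul_assoc]; exact hA1
  have hNA : AWGMP * A = N := by
    rw [hAWGMPeq, hNdef, pow_succ T m, hT]
    simp only [Matrix.mul_assoc]
    rw [hA1']
  have hMN : M * N = M := by
    rw [hMdef, hNdef]
    simp only [Matrix.mul_assoc]
    rw [← Matrix.mul_assoc (T ^ (m + 1)) (WAcep ^ (m + 1)) (T ^ (m + 1)), hpow m,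
      ← Matrix.mul_assoc, hTkQ]
  have hNC : ∃ C : Matrix (Fin n) (Fin n) ℂ, N = C * M := by
    obtain ⟨C1, hC1⟩ := exists_factor' WAcepᴴ (T ^ k) (le_of_eq (hX3.trans hkd.symm))
    have hXfac : WAcep = C1ᴴ * (T ^ k)ᴴ := by
      have h2 := congrArg Matrix.conjTranspose hC1
      simpa [Matrix.conjTranspose_mul] using h2
    refine ⟨WAcep ^ m * C1ᴴ, ?_⟩
    calc N = WAcep ^ m * WAcep * T ^ (m + 1) := by rw [hNdef, pow_succ]
      _ = WAcep ^ m * C1ᴴ * ((T ^ k)ᴴ * T ^ (m + 1)) := by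
          rw [hXfac]; simp only [Matrix.mul_assoc]
      _ = WAcep ^ m * C1ᴴ * M := by rw [hMdef]
  constructor
  · intro h
    obtain ⟨C, hC⟩ := hNC
    have hNX : N * X = N * Adag * B := by
      calc N * X = C * (M * X) := by rw [hC, Matrix.mul_assoc]
        _ = C * (M * Adag * B) := by rw [h]
        _ = C * M * Adag * B := by simp only [Matrix.mul_assoc]
        _ = N * Adag * B := by rw [← hC]
    refine ⟨X, ?_⟩
    rw [hNA, hAWGMPeq, Matrix.sub_mul, Matrix.one_mul, hNX]
    abel
  · rintro ⟨Z, rfl⟩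
    rw [hNA, hAWGMPeq]
    simp only [Matrix.mul_add, Matrix.sub_mul, Matrix.mul_sub, Matrix.one_mul,
      ← Matrix.mul_assoc, hMN]
    abel
end
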